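/- Define f(u,r) := (1/(r−1)) ∑_{m=0}^{min(r,u)} binom(r,m) binom(u,m) (n!)^{m−1} ((n−1)!)^{r−m} (n−m)! m! (−1)^{r−m+1} u^{r−m}. If α ∈ a commutative ring satisfies the intersection numbers (α^s · L^{n−s}) = (n−s)! s! binom(u,s) d^s for 1 ≤ s ≤ u and 0 for s > u, and α^♮ := n!α − (α·L^{n−1})L, (L^n)=n!, then q_r(α) := −(1/((r−1)·n!)) ((α^♮)^r · L^{n−r}) = f(u,r)·d^r for 2 ≤ r ≤ n. -/
import Mathlib


/-- The homogeneous forms `q_r` evaluate as claimed on the class of an abelian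
subvariety: with `α^♮ := n!·α − (α·L^{n−1})·L`, if `(L^n) = n!` and
`(α^s·L^{n−s}) = (n−s)! s! C(u,s) d^s` (which vanishes for `s > u`), then
`q_r(α) := −(1/((r−1) n!)) ((α^♮)^r · L^{n−r}) = f(u,r) d^r` for `2 ≤ r ≤ n`,
where `f(u,r)` is the explicit sum in the paper. -/
theorem stmt_16 (R : Type*) [CommRing R] [Algebra ℚ R] (e : R →ₗ[ℚ] ℚ)
    (α L : R) (n u d : ℕ) (hn : 2 ≤ n) (hu1 : 1 ≤ u) (hun : u ≤ n) (hd : 1 ≤ d)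
    (hLn : e (L ^ n) = (n.factorial : ℚ))
    (hα : ∀ s, 1 ≤ s → s ≤ n →
      e (α ^ s * L ^ (n - s)) =
        ((n - s).factorial : ℚ) * (s.factorial : ℚ) * (u.choose s : ℚ) * (d : ℚ) ^ s) :
    ∀ r, 2 ≤ r → r ≤ n →
      -(1 / (((r : ℚ) - 1) * (n.factorial : ℚ))) *
          e (((n.factorial : ℚ) • α - e (α * L ^ (n - 1)) • L) ^ r * L ^ (n - r)) =
        (1 / ((r : ℚ) - 1)) *
          (∑ m ∈ Finset.range (min r u + 1),
            (r.choose m : ℚ) * (u.choose m : ℚ) * (n.factorial : ℚ) ^ ((m : ℤ) - 1) *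
              ((n - 1).factorial : ℚ) ^ (r - m) * ((n - m).factorial : ℚ) *
              (m.factorial : ℚ) * (-1 : ℚ) ^ (r - m + 1) * (u : ℚ) ^ (r - m)) *
          (d : ℚ) ^ r := by
  intro r hr2 hrn
  -- the value of c := e (α * L^(n-1))
  have hc : e (α * L ^ (n - 1)) = ((n - 1).factorial : ℚ) * (u : ℚ) * (d : ℚ) := by
    have := hα 1 le_rfl (by omega)
    simpa [Nat.choose_one_right, mul_assoc] using this
  set c : ℚ := e (α * L ^ (n - 1)) with hcdef
  -- uniform intersection numbers
  have key : ∀ m, m ≤ n → e (α ^ m * L ^ (n - m)) =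
      ((n - m).factorial : ℚ) * (m.factorial : ℚ) * (u.choose m : ℚ) * (d : ℚ) ^ m := by
    intro m hm
    rcases Nat.eq_zero_or_pos m with h0 | h1
    · subst h0; simpa using hLn
    · exact hα m h1 hm
  -- expand the power via the binomial theorem
  have expand : (((n.factorial : ℚ)) • α - c • L) ^ r * L ^ (n - r) =
      ∑ m ∈ Finset.range (r + 1),
        ((-1 : ℚ) ^ (m + r) * (n.factorial : ℚ) ^ m * c ^ (r - m) * (r.choose m : ℚ)) •
          (α ^ m * L ^ (n - m)) := by
    rw [sub_pow, Finset.sum_mul]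
    refine Finset.sum_congr rfl fun m hm => ?_
    rw [Finset.mem_range] at hm
    have hLL : L ^ (r - m) * L ^ (n - r) = L ^ (n - m) := by
      rw [← pow_add]; congr 1; omega
    rw [← hLL, smul_pow, smul_pow]
    simp only [Algebra.smul_def, map_mul, map_pow, map_neg, map_one, map_natCast]
    push_cast
    ring
  rw [expand, map_sum]
  simp only [map_smul, smul_eq_mul]
  -- extend the RHS sum to range (r+1)
  have hext : (∑ m ∈ Finset.range (min r u + 1),
        (r.choose m : ℚ) * (u.choose m : ℚ) * (n.factorial : ℚ) ^ ((m : ℤ) - 1) *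
          ((n - 1).factorial : ℚ) ^ (r - m) * ((n - m).factorial : ℚ) *
          (m.factorial : ℚ) * (-1 : ℚ) ^ (r - m + 1) * (u : ℚ) ^ (r - m)) =
      ∑ m ∈ Finset.range (r + 1),
        (r.choose m : ℚ) * (u.choose m : ℚ) * (n.factorial : ℚ) ^ ((m : ℤ) - 1) *
          ((n - 1).factorial : ℚ) ^ (r - m) * ((n - m).factorial : ℚ) *
          (m.factorial : ℚ) * (-1 : ℚ) ^ (r - m + 1) * (u : ℚ) ^ (r - m) := by
    refine Finset.sum_subset ?_ ?_
    · intro x hx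
      rw [Finset.mem_range] at hx ⊢
      omega
    · intro x hx hx'
      rw [Finset.mem_range] at hx hx'
      have : u < x := by omega
      rw [Nat.choose_eq_zero_of_lt this]
      simp
  rw [hext]
  rw [Finset.mul_sum, Finset.mul_sum, Finset.sum_mul]
  refine Finset.sum_congr rfl fun m hm => ?_
  rw [Finset.mem_range] at hm
  have hmr : m ≤ r := by omega
  rw [key m (by omega), hc]
  have hnf : (n.factorial : ℚ) ≠ 0 := Nat.cast_ne_zero.mpr n.factorial_ne_zero
  have hr1 : ((r : ℚ) - 1) ≠ 0 := by
    have : (2 : ℚ) ≤ (r : ℚ) := by exact_mod_cast hr2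
    linarith
  have hzpow : (n.factorial : ℚ) ^ ((m : ℤ) - 1) = (n.factorial : ℚ) ^ m / (n.factorial : ℚ) := by
    rw [zpow_sub₀ hnf, zpow_one, zpow_natCast]
  have hdpow : ((d : ℚ)) ^ (r - m) * (d : ℚ) ^ m = (d : ℚ) ^ r := by
    rw [← pow_add]; congr 1; omega
  have hsign : (-1 : ℚ) ^ (m + r) = (-1 : ℚ) ^ (r - m) := by
    conv_lhs => rw [show m + r = (r - m) + 2 * m by omega]
    rw [pow_add, pow_mul]
    simp
  rw [hzpow, hsign]
  rw [mul_pow, mul_pow]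
  field_simp
  rw [show (-1 : ℚ) ^ (r - m + 1) = -(-1 : ℚ) ^ (r - m) by rw [pow_succ]; ring]
  rw [← hdpow]
  ring
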